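/- In the same setting, for all ζ in the open interval where the expression is positive, the moment generating function of −ι_s(X;Y,ĥ) is g(ζ) = E[exp(−ζ ι_s(X;Y,ĥ))] = (1 + sρ|ĥ|²)^{−ζ} · (1 + (β − α)ζ − αβ(1 − ν)ζ²)^{−1}. -/

import Mathlib

open MeasureTheory ProbabilityTheory

/-- The circularly-symmetric complex Gaussian distribution `CN(0, v)`:
real and imaginary parts are independent real Gaussians of variance `v/2`. -/
noncomputable def complexGaussian (v : ℝ) : Measure ℂ :=
  ((gaussianReal 0 (Real.toNNReal (v/2))).prod
    (gaussianReal 0 (Real.toNNReal (v/2)))).map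
    (fun p => (p.1 : ℂ) + (p.2 : ℂ) * Complex.I)

/-- The generalized information density for i.i.d. Gaussian codebooks and SNN decoding. -/
noncomputable def infoDens (s ρ : ℝ) (hhat x y : ℂ) : ℝ :=
  -s * ‖y - hhat * x‖ ^ 2
    + s * ‖y‖ ^ 2 / (1 + s * ρ * ‖hhat‖ ^ 2)
    + Real.log (1 + s * ρ * ‖hhat‖ ^ 2)

open Real NNReal ENNReal

lemma cexp_eq_ofReal (B C : ℝ) (x : ℝ) :
    Complex.exp ((B:ℂ) * (x:ℂ) ^ 2 + (C:ℂ) * (x:ℂ) + 0)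
      = ((rexp (B * x ^ 2 + C * x) : ℝ) : ℂ) := by
  rw [Complex.ofReal_exp]; congr 1; push_cast; ring

lemma integrable_rexp_quadratic {B : ℝ} (hB : B < 0) (C : ℝ) :
    Integrable (fun x : ℝ => rexp (B * x ^ 2 + C * x)) := by
  have h := (integrable_cexp_quadratic' (b := (B : ℂ)) (by simpa using hB) (C : ℂ) 0).norm
  refine h.congr (Filter.Eventually.of_forall fun x => ?_)
  show ‖Complex.exp ((B:ℂ) * (x:ℂ) ^ 2 + (C:ℂ) * (x:ℂ) + 0)‖ = _
  rw [cexp_eq_ofReal, Complex.norm_real, Real.norm_of_nonneg (Real.exp_pos _).le]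

lemma integral_rexp_quadratic {B : ℝ} (hB : B < 0) (C : ℝ) :
    ∫ x : ℝ, rexp (B * x ^ 2 + C * x)
      = Real.sqrt (π / (-B)) * rexp (- C ^ 2 / (4 * B)) := by
  have h := integral_cexp_quadratic (b := (B : ℂ)) (by simpa using hB) (C : ℂ) 0
  have hfun : (fun x : ℝ => Complex.exp ((B:ℂ) * (x:ℂ) ^ 2 + (C:ℂ) * (x:ℂ) + 0))
      = fun x : ℝ => ((rexp (B * x ^ 2 + C * x) : ℝ) : ℂ) := funext (cexp_eq_ofReal B C)
  rw [hfun] at h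
  have hoR : (∫ x : ℝ, ((rexp (B * x ^ 2 + C * x) : ℝ) : ℂ))
      = ((∫ x : ℝ, rexp (B * x ^ 2 + C * x) : ℝ) : ℂ) := integral_ofReal
  rw [hoR] at h
  have hR : ((Real.pi : ℂ) / -(B:ℂ)) ^ ((1:ℂ)/2) * Complex.exp (0 - (C:ℂ)^2/(4*(B:ℂ)))
      = ((Real.sqrt (π / (-B)) * rexp (- C ^ 2 / (4 * B)) : ℝ) : ℂ) := by
    have hB' : (0:ℝ) < -B := by linarith
    have h1 : ((Real.pi : ℂ) / -(B:ℂ)) = ((π / (-B) : ℝ) : ℂ) := by push_cast; ring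
    have hpos : (0:ℝ) ≤ π / (-B) := div_nonneg Real.pi_pos.le hB'.le
    rw [h1, show ((1:ℂ)/2) = (((1:ℝ)/2 : ℝ) : ℂ) by norm_num,
      ← Complex.ofReal_cpow hpos, ← Real.sqrt_eq_rpow]
    push_cast [Complex.ofReal_exp]
    congr 1
    push_cast
    ring
  rw [hR] at h
  exact_mod_cast h

lemma gauss_withDensity (v : ℝ≥0) (hv : v ≠ 0) (g : ℝ → ℝ) :
    ∫ x, g x ∂(gaussianReal 0 v)
      = ∫ x, gaussianPDFReal 0 v x * g x := by
  rw [gaussianReal_of_var_ne_zero _ hv]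
  have hpdf : gaussianPDF 0 v = fun x => (((gaussianPDFReal 0 v x).toNNReal : ℝ≥0) : ℝ≥0∞) := rfl
  rw [hpdf, integral_withDensity_eq_integral_smul
    ((measurable_gaussianPDFReal 0 v).real_toNNReal)]
  congr 1; funext x
  rw [NNReal.smul_def, smul_eq_mul, Real.coe_toNNReal _ (gaussianPDFReal_nonneg 0 v x)]

lemma gauss1D_aux (v : ℝ≥0) (hv : v ≠ 0) (c b : ℝ) (hc : 2 * c * v < 1) (x : ℝ) :
    gaussianPDFReal 0 v x * rexp (c * x ^ 2 + b * x)
    = (√(2 * π * v))⁻¹ * rexp ((c - 1/(2*v)) * x ^ 2 + b * x) := by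
  have hv' : (0:ℝ) < v := lt_of_le_of_ne v.2 (by exact_mod_cast (Ne.symm hv))
  rw [gaussianPDFReal, mul_assoc, ← Real.exp_add]
  congr 2
  field_simp
  ring

lemma gauss1D (v : ℝ≥0) (c b : ℝ) (hc : 2 * c * v < 1) :
    Integrable (fun x => rexp (c * x ^ 2 + b * x)) (gaussianReal 0 v) ∧
    ∫ x, rexp (c * x ^ 2 + b * x) ∂(gaussianReal 0 v)
      = (Real.sqrt (1 - 2 * c * v))⁻¹ * rexp (b ^ 2 * v / (2 * (1 - 2 * c * v))) := by
  by_cases hv : v = 0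
  · subst hv
    constructor
    · simp only [gaussianReal_zero_var]
      exact (integrable_const (rexp (c * 0 ^ 2 + b * 0))).congr
        ((ae_eq_dirac (fun x => rexp (c * x ^ 2 + b * x))).symm)
    · simp [gaussianReal_zero_var, integral_dirac]
  · have hv' : (0:ℝ) < v := lt_of_le_of_ne v.2 (by exact_mod_cast (Ne.symm hv))
    have hB : c - 1/(2*(v:ℝ)) < 0 := by
      have h2 : c < 1/(2*(v:ℝ)) := by
        rw [lt_div_iff₀ (by positivity : (0:ℝ) < 2*(v:ℝ))]
        linarith
      linarith
    constructor
    · rw [gaussianReal_of_var_ne_zero _ hv]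
      have hpdf : gaussianPDF 0 v = fun x => (((gaussianPDFReal 0 v x).toNNReal : ℝ≥0) : ℝ≥0∞) := rfl
      rw [hpdf, integrable_withDensity_iff_integrable_smul
        ((measurable_gaussianPDFReal 0 v).real_toNNReal)]
      refine ((integrable_rexp_quadratic hB b).const_mul ((√(2 * π * v))⁻¹)).congr
        (Filter.Eventually.of_forall fun x => ?_)
      show _ = (gaussianPDFReal 0 v x).toNNReal • rexp (c * x ^ 2 + b * x)
      rw [NNReal.smul_def, smul_eq_mul, Real.coe_toNNReal _ (gaussianPDFReal_nonneg 0 v x),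
        gauss1D_aux v hv c b hc x]
    · rw [gauss_withDensity v hv]
      calc ∫ x, gaussianPDFReal 0 v x * rexp (c * x ^ 2 + b * x)
          = ∫ x, (√(2 * π * v))⁻¹ * rexp ((c - 1/(2*v)) * x ^ 2 + b * x) := by
            congr 1; funext x; exact gauss1D_aux v hv c b hc x
        _ = (√(2 * π * v))⁻¹ * ∫ x, rexp ((c - 1/(2*v)) * x ^ 2 + b * x) :=
            integral_const_mul _ _
        _ = (√(2 * π * v))⁻¹ * (Real.sqrt (π / (-(c - 1/(2*v)))) *
              rexp (- b ^ 2 / (4 * (c - 1/(2*v))))) := by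
            rw [integral_rexp_quadratic hB b]
        _ = (Real.sqrt (1 - 2 * c * v))⁻¹ * rexp (b ^ 2 * v / (2 * (1 - 2 * c * v))) := by
            rw [show π / (-(c - 1/(2*v))) = (2*π*v) / (1 - 2*c*v) by field_simp; rw [← div_neg]; congr 1; ring]
            have hd : (1:ℝ) - 2*c*(v:ℝ) ≠ 0 := by linarith
            have hd2 : c - 1/(2*(v:ℝ)) ≠ 0 := ne_of_lt hB
            have hv0 : (v:ℝ) ≠ 0 := ne_of_gt hv'
            have e1 : (√(2*π*(v:ℝ)))⁻¹ * √(2*π*(v:ℝ)/(1-2*c*(v:ℝ)))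
                = (√(1-2*c*(v:ℝ)))⁻¹ := by
              rw [Real.sqrt_div (by positivity : (0:ℝ) ≤ 2*π*(v:ℝ))]
              rw [div_eq_mul_inv, ← mul_assoc,
                inv_mul_cancel₀ (by positivity : √(2*π*(v:ℝ)) ≠ 0), one_mul]
            have e2 : -b^2/(4*(c - 1/(2*(v:ℝ)))) = b ^ 2 * (v:ℝ) / (2 * (1 - 2 * c * (v:ℝ))) := by
              rw [div_eq_div_iff (by intro hz; apply hd2; linarith [mul_eq_zero.mp hz]; ) (by
                intro hz; apply hd; linarith [mul_eq_zero.mp hz])]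
              field_simp
              ring
            rw [← mul_assoc, e1, e2]

lemma phi_meas : Measurable (fun p : ℝ × ℝ => (p.1 : ℂ) + (p.2 : ℂ) * Complex.I) := by
  fun_prop

lemma comp_phi (t : ℝ) (m : ℂ) (p : ℝ × ℝ) :
    t * Complex.normSq ((p.1 : ℂ) + (p.2 : ℂ) * Complex.I)
      + 2 * ((starRingEnd ℂ) m * ((p.1 : ℂ) + (p.2 : ℂ) * Complex.I)).re
    = (t * p.1 ^ 2 + (2 * m.re) * p.1) + (t * p.2 ^ 2 + (2 * m.im) * p.2) := by
  simp [Complex.normSq_apply, Complex.mul_re, Complex.conj_re, Complex.conj_im]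
  ring

lemma gaussC_cont (t : ℝ) (m : ℂ) :
    Continuous (fun z : ℂ => rexp (t * Complex.normSq z + 2 * ((starRingEnd ℂ) m * z).re)) := by
  refine Real.continuous_exp.comp ?_
  refine ((continuous_const.mul Complex.continuous_normSq).add
    (continuous_const.mul (Complex.continuous_re.comp (continuous_const.mul continuous_id))))

lemma gaussC (v : ℝ) (hv : 0 ≤ v) (t : ℝ) (m : ℂ) (h : t * v < 1) :
    Integrable (fun z : ℂ => rexp (t * Complex.normSq z + 2 * ((starRingEnd ℂ) m * z).re))
      (complexGaussian v) ∧
    ∫ z : ℂ, rexp (t * Complex.normSq z + 2 * ((starRingEnd ℂ) m * z).re) ∂(complexGaussian v)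
      = (1 - t * v)⁻¹ * rexp (v * Complex.normSq m / (1 - t * v)) := by
  set V : ℝ≥0 := Real.toNNReal (v/2) with hV
  set F : ℝ → ℝ := fun a => rexp (t * a ^ 2 + (2 * m.re) * a) with hF
  set G : ℝ → ℝ := fun a => rexp (t * a ^ 2 + (2 * m.im) * a) with hG
  have hVc : (V : ℝ) = v / 2 := Real.coe_toNNReal _ (by linarith)
  have hc1 : 2 * t * (V:ℝ) < 1 := by rw [hVc]; linarith [h]
  have hcont := gaussC_cont t m
  have h1 := gauss1D V t (2 * m.re) hc1
  have h2 := gauss1D V t (2 * m.im) hc1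
  have hpos : (0:ℝ) < 1 - t * v := by linarith
  have hne : (1:ℝ) - t * v ≠ 0 := ne_of_gt hpos
  have hcomp : ((fun z : ℂ => rexp (t * Complex.normSq z + 2 * ((starRingEnd ℂ) m * z).re))
        ∘ (fun p : ℝ × ℝ => (p.1 : ℂ) + (p.2 : ℂ) * Complex.I))
      = fun p : ℝ × ℝ => F p.1 * G p.2 := by
    funext p
    simp only [Function.comp_apply, hF, hG, ← Real.exp_add, comp_phi]
  have hint : Integrable (fun z : ℂ => rexp (t * Complex.normSq z
      + 2 * ((starRingEnd ℂ) m * z).re)) (complexGaussian v) := by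
    rw [complexGaussian, integrable_map_measure (by
        rw [← complexGaussian]; exact hcont.aestronglyMeasurable) phi_meas.aemeasurable, hcomp]
    exact h1.1.mul_prod h2.1
  refine ⟨hint, ?_⟩
  rw [complexGaussian, integral_map phi_meas.aemeasurable (by
    rw [← complexGaussian]; exact hcont.aestronglyMeasurable)]
  have hsqi : (√(1 - 2 * t * (V:ℝ)))⁻¹ * (√(1 - 2 * t * (V:ℝ)))⁻¹ = (1 - t * v)⁻¹ := by
    rw [← mul_inv, Real.mul_self_sqrt (by rw [hVc]; linarith)]
    congr 1
    rw [hVc]; ring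
  have hE : (2*m.re)^2 * (V:ℝ)/(2*(1 - 2*t*(V:ℝ))) + (2*m.im)^2 * (V:ℝ)/(2*(1 - 2*t*(V:ℝ)))
      = v * Complex.normSq m / (1 - t*v) := by
    rw [hVc, Complex.normSq_apply]
    rw [show (1 - 2 * t * (v/2)) = 1 - t * v by ring]
    field_simp
  calc ∫ p : ℝ × ℝ, rexp (t * Complex.normSq ((p.1 : ℂ) + (p.2 : ℂ) * Complex.I)
        + 2 * ((starRingEnd ℂ) m * ((p.1 : ℂ) + (p.2 : ℂ) * Complex.I)).re)
        ∂((gaussianReal 0 V).prod (gaussianReal 0 V))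
      = ∫ p : ℝ × ℝ, F p.1 * G p.2 ∂((gaussianReal 0 V).prod (gaussianReal 0 V)) := by
        apply integral_congr_ae
        filter_upwards with p
        simp only [hF, hG, ← Real.exp_add, comp_phi]
    _ = (∫ x, F x ∂(gaussianReal 0 V)) * ∫ y, G y ∂(gaussianReal 0 V) := integral_prod_mul F G
    _ = (1 - t * v)⁻¹ * rexp (v * Complex.normSq m / (1 - t * v)) := by
        rw [hF, hG, h1.2, h2.2]
        rw [show (√(1 - 2*t*(V:ℝ)))⁻¹ * rexp ((2*m.re)^2 * (V:ℝ) / (2*(1 - 2*t*(V:ℝ))))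
            * ((√(1 - 2*t*(V:ℝ)))⁻¹ * rexp ((2*m.im)^2 * (V:ℝ) / (2*(1 - 2*t*(V:ℝ)))))
          = ((√(1 - 2*t*(V:ℝ)))⁻¹ * (√(1 - 2*t*(V:ℝ)))⁻¹)
            * (rexp ((2*m.re)^2 * (V:ℝ)/(2*(1 - 2*t*(V:ℝ))))
              * rexp ((2*m.im)^2 * (V:ℝ)/(2*(1-2*t*(V:ℝ))))) from by ring,
          hsqi, ← Real.exp_add, hE]

instance complexGaussian_prob (v : ℝ) : IsProbabilityMeasure (complexGaussian v) :=
  Measure.isProbabilityMeasure_map phi_meas.aemeasurable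

lemma core (ρ σ2 : ℝ) (hρ : 0 ≤ ρ) (hσ : 0 ≤ σ2) (p q : ℝ) (r : ℂ)
    (hq : q * σ2 < 1)
    (hG : 0 < (1 - q * σ2) * (1 - p * ρ) - ρ * σ2 * Complex.normSq r) :
    ∫ z : ℂ × ℂ, rexp (p * Complex.normSq z.1 + q * Complex.normSq z.2
        + 2 * (r * z.1 * (starRingEnd ℂ) z.2).re)
      ∂((complexGaussian ρ).prod (complexGaussian σ2))
      = ((1 - q * σ2) * (1 - p * ρ) - ρ * σ2 * Complex.normSq r)⁻¹ := by
  have hq' : (0:ℝ) < 1 - q * σ2 := by linarith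
  set t' : ℝ := p + σ2 * Complex.normSq r / (1 - q * σ2) with ht'
  have key : t' * ρ * (1 - q*σ2) = (p*ρ)*(1-q*σ2) + ρ*σ2*Complex.normSq r := by
    rw [ht']; linear_combination (σ2 * Complex.normSq r * ρ) * (div_mul_cancel₀ (1:ℝ) hq'.ne')
  have ht'ρ : t' * ρ < 1 := by nlinarith [hG, hq', key]
  have hre : ∀ u w : ℂ, (u * (starRingEnd ℂ) w).re = ((starRingEnd ℂ) u * w).re := by
    intro u w
    simp only [Complex.mul_re, Complex.conj_re, Complex.conj_im]
    ring
  have hcf : Continuous (fun z : ℂ × ℂ => rexp (p * Complex.normSq z.1 + q * Complex.normSq z.2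
      + 2 * (r * z.1 * (starRingEnd ℂ) z.2).re)) := by
    refine Real.continuous_exp.comp ?_
    refine Continuous.add (Continuous.add ?_ ?_) ?_
    · exact continuous_const.mul (Complex.continuous_normSq.comp continuous_fst)
    · exact continuous_const.mul (Complex.continuous_normSq.comp continuous_snd)
    · refine continuous_const.mul (Complex.continuous_re.comp ?_)
      exact ((continuous_const.mul continuous_fst).mul
        (Complex.continuous_conj.comp continuous_snd))
  -- pointwise splitting
  have hsplit : ∀ x w : ℂ, rexp (p * Complex.normSq x + q * Complex.normSq w
        + 2 * (r * x * (starRingEnd ℂ) w).re)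
      = rexp (p * Complex.normSq x) * rexp (q * Complex.normSq w
        + 2 * ((starRingEnd ℂ) (r * x) * w).re) := by
    intro x w
    rw [← Real.exp_add, hre (r * x) w, add_assoc]
  -- inner integral
  have hinner : ∀ x : ℂ, ∫ w : ℂ, rexp (p * Complex.normSq x + q * Complex.normSq w
        + 2 * (r * x * (starRingEnd ℂ) w).re) ∂(complexGaussian σ2)
      = (1 - q * σ2)⁻¹ * rexp (t' * Complex.normSq x) := by
    intro x
    simp_rw [hsplit x]
    rw [integral_const_mul, (gaussC σ2 hσ q (r * x) hq).2, map_mul]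
    rw [show rexp (p * Complex.normSq x) * ((1 - q*σ2)⁻¹
          * rexp (σ2 * (Complex.normSq r * Complex.normSq x) / (1 - q*σ2)))
        = (1 - q*σ2)⁻¹ * (rexp (p * Complex.normSq x)
          * rexp (σ2 * (Complex.normSq r * Complex.normSq x)/(1 - q*σ2))) from by ring,
      ← Real.exp_add]
    congr 2
    rw [ht']
    field_simp
  have hinnerInt : ∀ x : ℂ, Integrable (fun w : ℂ => rexp (p * Complex.normSq x
        + q * Complex.normSq w + 2 * (r * x * (starRingEnd ℂ) w).re)) (complexGaussian σ2) := by
    intro x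
    have := ((gaussC σ2 hσ q (r * x) hq).1.const_mul (rexp (p * Complex.normSq x)))
    exact this.congr (Filter.Eventually.of_forall fun w => (hsplit x w).symm)
  have houterInt : Integrable (fun x : ℂ => rexp (t' * Complex.normSq x)) (complexGaussian ρ) := by
    have h0 := (gaussC ρ hρ t' 0 ht'ρ).1
    refine h0.congr (Filter.Eventually.of_forall fun x => ?_)
    simp
  have houter : ∫ x : ℂ, rexp (t' * Complex.normSq x) ∂(complexGaussian ρ) = (1 - t' * ρ)⁻¹ := by
    simpa using (gaussC ρ hρ t' 0 ht'ρ).2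
  -- integrability on the product
  have hint : Integrable (fun z : ℂ × ℂ => rexp (p * Complex.normSq z.1 + q * Complex.normSq z.2
      + 2 * (r * z.1 * (starRingEnd ℂ) z.2).re)) ((complexGaussian ρ).prod (complexGaussian σ2)) := by
    rw [integrable_prod_iff hcf.aestronglyMeasurable]
    constructor
    · exact Filter.Eventually.of_forall fun x => hinnerInt x
    · refine (houterInt.const_mul ((1 - q*σ2)⁻¹)).congr
        (Filter.Eventually.of_forall fun x => ?_)
      show (1 - q*σ2)⁻¹ * rexp (t' * Complex.normSq x)
          = ∫ w : ℂ, ‖rexp (p * Complex.normSq x + q * Complex.normSq w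
              + 2 * (r * x * (starRingEnd ℂ) w).re)‖ ∂(complexGaussian σ2)
      rw [← hinner x]
      apply integral_congr_ae
      filter_upwards with w
      exact (Real.norm_of_nonneg (Real.exp_pos _).le).symm
  rw [integral_prod _ hint]
  calc ∫ x : ℂ, ∫ w : ℂ, rexp (p * Complex.normSq x + q * Complex.normSq w
        + 2 * (r * x * (starRingEnd ℂ) w).re) ∂(complexGaussian σ2) ∂(complexGaussian ρ)
      = ∫ x : ℂ, (1 - q * σ2)⁻¹ * rexp (t' * Complex.normSq x) ∂(complexGaussian ρ) := by
        apply integral_congr_ae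
        filter_upwards with x
        exact hinner x
    _ = (1 - q * σ2)⁻¹ * (1 - t' * ρ)⁻¹ := by rw [integral_const_mul, houter]
    _ = ((1 - q * σ2) * (1 - p * ρ) - ρ * σ2 * Complex.normSq r)⁻¹ := by
        rw [← mul_inv]
        congr 1
        linear_combination -key

lemma hpoint (s ρ ζ : ℝ) (h hhat : ℂ) (hK : (1 + s*ρ*Complex.normSq hhat) ≠ 0)
    (x w : ℂ) :
    -ζ * infoDens s ρ hhat x (h*x + w)
    = (ζ*(s*(Complex.normSq (h-hhat) - Complex.normSq h/(1+s*ρ*Complex.normSq hhat))))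
        * Complex.normSq x
      + (ζ*(s*(1 - 1/(1+s*ρ*Complex.normSq hhat)))) * Complex.normSq w
      + 2 * (((Complex.ofReal (ζ*s) * ((h-hhat)
          - Complex.ofReal (1/(1+s*ρ*Complex.normSq hhat)) * h)) * x * (starRingEnd ℂ) w).re)
      + Real.log (1+s*ρ*Complex.normSq hhat) * (-ζ) := by
  simp only [infoDens, Complex.sq_norm, Complex.normSq_apply, Complex.add_re, Complex.add_im,
    Complex.sub_re, Complex.sub_im, Complex.mul_re, Complex.mul_im, Complex.ofReal_re,
    Complex.ofReal_im, Complex.conj_re, Complex.conj_im]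
  field_simp
  ring

set_option maxHeartbeats 2000000 in
/-- The MGF of `−ι_s(X;Y,ĥ)`:
`E[exp(−ζ ι_s)] = (1 + sρ|ĥ|²)^{−ζ} (1 + (β−α)ζ − αβ(1−ν)ζ²)⁻¹`
for all `ζ` with `1 + (β−α)ζ − αβ(1−ν)ζ² > 0`. -/
theorem infoDens_mgf {Ω : Type*} [MeasurableSpace Ω]
    (μ : Measure Ω) [IsProbabilityMeasure μ]
    (ρ σ2 s : ℝ) (hρ : 0 ≤ ρ) (hσ : 0 ≤ σ2) (hs : 0 < s) (h hhat : ℂ)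
    (X W : Ω → ℂ) (hXm : Measurable X) (hWm : Measurable W)
    (hX : μ.map X = complexGaussian ρ) (hW : μ.map W = complexGaussian σ2)
    (hind : IndepFun X W μ)
    (Y : Ω → ℂ) (hY : ∀ ω, Y ω = h * X ω + W ω)
    (α β ν : ℝ)
    (hα : α = s * (ρ * ‖h - hhat‖ ^ 2 + σ2))
    (hβ : β = s * (ρ * ‖h‖ ^ 2 + σ2) / (1 + s * ρ * ‖hhat‖ ^ 2))
    (hν : ν = s ^ 2 * ‖((ρ * ‖h‖ ^ 2 + σ2 : ℝ)
          - (starRingEnd ℂ) h * hhat * ρ : ℂ)‖ ^ 2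
        / (α * β * (1 + s * ρ * ‖hhat‖ ^ 2)))
    (ζ : ℝ) (hdom : 0 < 1 + (β - α) * ζ - α * β * (1 - ν) * ζ ^ 2) :
    ∫ ω, Real.exp (-ζ * infoDens s ρ hhat (X ω) (Y ω)) ∂μ
      = Real.rpow (1 + s * ρ * ‖hhat‖ ^ 2) (-ζ)
          * (1 + (β - α) * ζ - α * β * (1 - ν) * ζ ^ 2)⁻¹ := by
  -- abbreviations
  have hK : (0:ℝ) < 1 + s*ρ*Complex.normSq hhat := by
    have h1 : 0 ≤ s*ρ*Complex.normSq hhat :=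
      mul_nonneg (mul_nonneg hs.le hρ) (Complex.normSq_nonneg _)
    linarith
  have hK0 : (1 + s*ρ*Complex.normSq hhat) ≠ 0 := ne_of_gt hK
  rw [Complex.sq_norm] at hα hβ hν
  rw [Complex.sq_norm] at hβ hν
  rw [Complex.sq_norm] at hν
  set K : ℝ := 1 + s*ρ*Complex.normSq hhat with hKdef
  set H : ℝ := Complex.normSq h with hH
  set Hh : ℝ := Complex.normSq hhat with hHh
  set A : ℝ := Complex.normSq (h - hhat) with hA
  set N : ℝ := Complex.normSq (((ρ * H + σ2 : ℝ) : ℂ)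
      - (starRingEnd ℂ) h * hhat * (ρ:ℂ)) with hN
  set p : ℝ := ζ*(s*(A - H/K)) with hp
  set q : ℝ := ζ*(s*(1 - 1/K)) with hq
  set r : ℂ := Complex.ofReal (ζ*s) * ((h-hhat) - Complex.ofReal (1/K) * h) with hr
  clear_value K H Hh A N p q r
  -- r's normSq
  have hM : Complex.normSq r = (ζ*s)^2 * Complex.normSq ((h-hhat) - Complex.ofReal (1/K) * h) := by
    rw [hr, Complex.normSq_mul, Complex.normSq_ofReal]
    ring
  -- key polynomial identity for Gval
  have hGpoly : (1 - q*σ2)*(1 - p*ρ) - ρ*σ2*Complex.normSq r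
      = 1 + (s*(ρ*H+σ2)/K - s*(ρ*A+σ2))*ζ - ρ*σ2*s^2*(Hh/K)*ζ^2 := by
    rw [hM, hp, hq, hKdef, hH, hHh, hA]
    simp only [Complex.normSq_apply, Complex.sub_re, Complex.sub_im, Complex.mul_re,
      Complex.mul_im, Complex.ofReal_re, Complex.ofReal_im]
    have hK0' : (1 + s*ρ*(hhat.re*hhat.re + hhat.im*hhat.im)) ≠ 0 := by
      have h2 := hK0
      rw [hKdef, hHh] at h2
      simpa [Complex.normSq_apply] using h2
    field_simp
    ring
  -- the auxiliary exact identity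
  have haux : (ρ*A+σ2)*(ρ*H+σ2) - N = ρ*σ2*Hh := by
    rw [hN, hA, hH, hHh]
    simp only [Complex.normSq_apply, Complex.sub_re, Complex.sub_im, Complex.mul_re,
      Complex.mul_im, Complex.ofReal_re, Complex.ofReal_im, Complex.conj_re, Complex.conj_im]
    ring
  -- identity between D and Gval
  have hiden : (1 - q*σ2)*(1 - p*ρ) - ρ*σ2*Complex.normSq r
      = 1 + (β - α) * ζ - α * β * (1 - ν) * ζ ^ 2 := by
    by_cases hab : α * β = 0
    · have hν0 : ν = 0 := by
        rw [hν, show α * β * K = 0 from by rw [hab]; ring]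
        exact _root_.div_zero _
      have hfac : (ρ*A+σ2)*(ρ*H+σ2) = 0 := by
        have : α * β = s^2 * ((ρ*A+σ2)*(ρ*H+σ2)) / K := by
          rw [hα, hβ]; field_simp
        rw [this] at hab
        have := mul_eq_zero.mp (div_eq_zero_iff.mp hab |>.resolve_right hK0)
        rcases this with h1 | h2
        · exact absurd h1 (pow_ne_zero 2 hs.ne')
        · exact h2
      have hzero : ρ*σ2*Hh = 0 := by
        have hNn : 0 ≤ N := by rw [hN]; exact Complex.normSq_nonneg _
        have hHhn : 0 ≤ ρ*σ2*Hh := by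
          have : (0:ℝ) ≤ Hh := by rw [hHh]; exact Complex.normSq_nonneg _
          positivity
        linarith [haux, hfac, hNn, hHhn]
      rw [hGpoly, hν0, hab]
      rw [hα, hβ]
      rw [show ρ*σ2*s^2*(Hh/K)*ζ^2 = (ρ*σ2*Hh)*(s^2/K)*ζ^2 from by ring, hzero]
      ring
    · have hν' : α*β*(1-ν) = α*β - s^2*N/K := by
        rw [hν]
        rw [mul_sub, mul_one, mul_div_assoc', mul_div_mul_left _ _ hab]
      have habK : α*β = s^2*((ρ*A+σ2)*(ρ*H+σ2))/K := by
        rw [hα, hβ]; field_simp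
      rw [hGpoly, hν', habK, hα, hβ]
      rw [show s^2*((ρ*A+σ2)*(ρ*H+σ2))/K - s^2*N/K
          = s^2*((ρ*A+σ2)*(ρ*H+σ2) - N)/K from by ring, haux]
      ring
  -- positivity facts
  have hGpos : 0 < (1 - q*σ2)*(1 - p*ρ) - ρ*σ2*Complex.normSq r := by
    rw [hiden]; exact hdom
  have hbr : (1 - 1/K)*(A - H/K) - Complex.normSq ((h-hhat) - Complex.ofReal (1/K) * h)
      = -(Hh/K) := by
    rw [hKdef, hH, hHh, hA]
    simp only [Complex.normSq_apply, Complex.sub_re, Complex.sub_im, Complex.mul_re,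
      Complex.mul_im, Complex.ofReal_re, Complex.ofReal_im]
    have hK0' : (1 + s*ρ*(hhat.re*hhat.re + hhat.im*hhat.im)) ≠ 0 := by
      have h2 := hK0
      rw [hKdef, hHh] at h2
      simpa [Complex.normSq_apply] using h2
    field_simp
    ring
  have huv : (q*σ2) * (p*ρ) ≤ ρ*σ2*Complex.normSq r := by
    have hHhK : 0 ≤ Hh/K := by
      have : (0:ℝ) ≤ Hh := by rw [hHh]; exact Complex.normSq_nonneg _
      positivity
    have : (q*σ2)*(p*ρ) - ρ*σ2*Complex.normSq r = -(ρ*σ2*(ζ*s)^2*(Hh/K)) := by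
      rw [hM, hp, hq]
      linear_combination (ρ*σ2*(ζ*s)^2) * hbr
    nlinarith [this, mul_nonneg (mul_nonneg (mul_nonneg hρ hσ) (sq_nonneg (ζ*s))) hHhK]
  have hqlt : q * σ2 < 1 := by
    by_contra hcon
    push_neg at hcon
    nlinarith [hGpos, huv, Complex.normSq_nonneg r, mul_nonneg hρ hσ]
  -- measure plumbing
  have hmap : μ.map (fun ω => (X ω, W ω)) = (complexGaussian ρ).prod (complexGaussian σ2) := by
    rw [← hX, ← hW]
    exact (indepFun_iff_map_prod_eq_prod_map_map hXm.aemeasurable hWm.aemeasurable).mp hind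
  have hcont : Continuous (fun z : ℂ × ℂ => rexp (-ζ * infoDens s ρ hhat z.1 (h*z.1 + z.2))) := by
    apply Real.continuous_exp.comp
    apply continuous_const.mul
    unfold infoDens
    apply Continuous.add
    apply Continuous.add
    · apply continuous_const.mul
      apply Continuous.pow
      exact continuous_norm.comp (by fun_prop)
    · apply Continuous.div_const
      apply continuous_const.mul
      apply Continuous.pow
      exact continuous_norm.comp (by fun_prop)
    · exact continuous_const
  calc ∫ ω, Real.exp (-ζ * infoDens s ρ hhat (X ω) (Y ω)) ∂μ
      = ∫ ω, (fun z : ℂ × ℂ => rexp (-ζ * infoDens s ρ hhat z.1 (h*z.1 + z.2))) (X ω, W ω) ∂μ := by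
        apply integral_congr_ae
        filter_upwards with ω
        rw [hY ω]
    _ = ∫ z : ℂ × ℂ, rexp (-ζ * infoDens s ρ hhat z.1 (h*z.1 + z.2))
          ∂((complexGaussian ρ).prod (complexGaussian σ2)) := by
        rw [← hmap, integral_map (hXm.prodMk hWm).aemeasurable hcont.aestronglyMeasurable]
    _ = ∫ z : ℂ × ℂ, Real.rpow K (-ζ) * rexp (p * Complex.normSq z.1 + q * Complex.normSq z.2
          + 2 * (r * z.1 * (starRingEnd ℂ) z.2).re)
          ∂((complexGaussian ρ).prod (complexGaussian σ2)) := by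
        apply integral_congr_ae
        filter_upwards with z
        have hKn : (1 + s*ρ*Complex.normSq hhat) ≠ 0 := by
          have h2 := hK0
          rw [hKdef, hHh] at h2
          exact h2
        rw [hpoint s ρ ζ h hhat hKn z.1 z.2]
        rw [← hA, ← hH, ← hHh, ← hKdef, ← hp, ← hq, ← hr]
        rw [Real.exp_add]
        rw [show Real.rpow K (-ζ) = rexp (Real.log K * (-ζ)) from Real.rpow_def_of_pos hK _]
        ring
    _ = Real.rpow K (-ζ) * ((1 - q * σ2) * (1 - p * ρ) - ρ * σ2 * Complex.normSq r)⁻¹ := by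
        rw [integral_const_mul, core ρ σ2 hρ hσ p q r hqlt hGpos]
    _ = Real.rpow (1 + s * ρ * ‖hhat‖ ^ 2) (-ζ)
          * (1 + (β - α) * ζ - α * β * (1 - ν) * ζ ^ 2)⁻¹ := by
        rw [hiden, Complex.sq_norm, ← hHh, ← hKdef]
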